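/- For positive definite matrices A, B ∈ P_n and t ∈ [0,1], the eigenvalues satisfy the log-majorisation λ(A^{1-t} B^t) ≺_log λ(A)^{1-t} λ(B)^t, i.e., for each k, ∏_{j=1}^k λ_j^↓(A^{1-t}B^t) ≤ ∏_{j=1}^k (λ_j^↓(A))^{1-t}(λ_j^↓(B))^t, with equality for k = n. -/

import Mathlib

/-!
The `k`-th compound `C_k(M)`, the matrix of `⋀ᵏ M`, is multiplicative, commutes with `ᴴ` and
sends a unitary diagonalisation `U diag(λ) Uᴴ` to `C_k(U) diag(∏_{i ∈ s} λᵢ) C_k(U)ᴴ` over the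
`k`-subsets `s`. So in the Loewner order `C_k(M) ≤ c • 1` iff every product of `k` eigenvalues of
`M` is at most `c`; for positive semidefinite `M` this says that the product of its `k` largest
eigenvalues is at most `c`. With `P = A^{(1-t)/2}`, `C = P B^t P` and `P² = A^{1-t}`,
`C_k(C) = C_k(P) C_k(B^t) C_k(P) ≤ β • C_k(P)² = β • C_k(A^{1-t}) ≤ α β • 1`,
where `α`, `β` are the products of the `k` largest eigenvalues of `A^{1-t}` and `B^t`.
For `k = d` both sides are `det C`.
-/

set_option linter.unusedSectionVars false

namespace CGO

open Matrix
open scoped ComplexOrder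

variable {n : Type*} [Fintype n] [DecidableEq n]

/-- The Löwner partial order `A ⪯ B` on matrices: `B - A` is positive semidefinite. -/
def LoewnerLE (A B : Matrix n n ℂ) : Prop := (B - A).PosSemidef

lemma cfc_isHermitian {A : Matrix n n ℂ} (hA : A.IsHermitian) (f : ℝ → ℝ) :
    (hA.cfc f).IsHermitian := by
  rw [Matrix.IsHermitian.cfc, Unitary.conjStarAlgAut_apply, Matrix.star_eq_conjTranspose]
  exact Matrix.isHermitian_mul_mul_conjTranspose _
    (Matrix.isHermitian_diagonal_of_self_adjoint _ (by
      show star _ = _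
      funext i; simp [Function.comp]))

/-- Real powers of a Hermitian matrix, defined through the spectral theorem
(for positive definite `A`, this is the usual power `A^t`). -/
noncomputable def mpow {A : Matrix n n ℂ} (hA : A.IsHermitian) (t : ℝ) : Matrix n n ℂ :=
  hA.cfc (fun x => x ^ t)

lemma mpow_isHermitian {A : Matrix n n ℂ} (hA : A.IsHermitian) (t : ℝ) :
    (mpow hA t).IsHermitian := cfc_isHermitian hA _

lemma mul_mul_isHermitian {A B : Matrix n n ℂ} (hA : A.IsHermitian) (hB : B.IsHermitian) :
    (A * B * A).IsHermitian := by
  have h := Matrix.isHermitian_mul_mul_conjTranspose A hB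
  rwa [hA.eq] at h

/-- The weighted matrix geometric mean `A #ₜ B := A^{1/2} (A^{-1/2} B A^{-1/2})^t A^{1/2}`.
The midpoint `t = 1/2` is the matrix geometric mean `A # B`. -/
noncomputable def wgmean {A B : Matrix n n ℂ} (hA : A.PosDef) (hB : B.PosDef) (t : ℝ) :
    Matrix n n ℂ :=
  mpow hA.1 (1/2) *
    mpow (mul_mul_isHermitian (mpow_isHermitian hA.1 (-(1/2))) hB.1) t *
    mpow hA.1 (1/2)

lemma wgmean_isHermitian {A B : Matrix n n ℂ} (hA : A.PosDef) (hB : B.PosDef) (t : ℝ) :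
    (wgmean hA hB t).IsHermitian := by
  have h := mul_mul_isHermitian (mpow_isHermitian hA.1 (1/2))
    (mpow_isHermitian (mul_mul_isHermitian (mpow_isHermitian hA.1 (-(1/2))) hB.1) t)
  simpa [wgmean, mul_assoc] using h

/-- The decreasingly sorted eigenvalues `λ₁^↓ ≥ λ₂^↓ ≥ …` of a Hermitian matrix. -/
noncomputable def eigDesc {d : ℕ} {A : Matrix (Fin d) (Fin d) ℂ} (hA : A.IsHermitian) :
    Fin d → ℝ :=
  fun i => hA.eigenvalues (Tuple.sort (fun j => -hA.eigenvalues j) i)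

end CGO

namespace Fin

theorem castLE_le_of_strictMono {d k : ℕ} (hk : k ≤ d) {e : Fin k → Fin d} (he : StrictMono e)
    (j : Fin k) : castLE hk j ≤ e j := by
  rw [le_def, val_castLE]
  simpa using Finset.card_le_card_of_injOn e
    (fun i hi => Finset.mem_Iic.2 (he.monotone (Finset.mem_Iic.1 hi))) he.injective.injOn
    (s := Finset.Iic j) (t := Finset.Iic (e j))

end Fin

namespace Finset

theorem prod_le_prod_castLE_of_antitone {d k : ℕ} (hk : k ≤ d) {g : Fin d → ℝ}
    (hg0 : ∀ i, 0 ≤ g i) (hg : Antitone g) {s : Finset (Fin d)} (hs : s.card = k) :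
    ∏ i ∈ s, g i ≤ ∏ j : Fin k, g (Fin.castLE hk j) := by
  rw [← s.map_orderEmbOfFin_univ hs, prod_map]
  exact prod_le_prod (fun _ _ => hg0 _) fun j _ =>
    hg (Fin.castLE_le_of_strictMono hk (s.orderEmbOfFin hs).strictMono j)

end Finset

namespace Set.powersetCard

theorem prod_ofFinEmbEquiv_symm {ι M : Type*} [LinearOrder ι] {k : ℕ} [CommMonoid M]
    (u : Set.powersetCard ι k) (v : ι → M) :
    ∏ j, v (ofFinEmbEquiv.symm u j) = ∏ i ∈ u.val, v i := by
  conv_rhs => rw [← u.val.map_orderEmbOfFin_univ u.prop, Finset.prod_map]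
  rfl

end Set.powersetCard

namespace Matrix

open Set.powersetCard

section Compound

variable {R ι : Type*} [CommRing R] [Fintype ι] [LinearOrder ι] (k : ℕ)

noncomputable def compound (M : Matrix ι ι R) :
    Matrix (Set.powersetCard ι k) (Set.powersetCard ι k) R :=
  LinearMap.toMatrix ((Pi.basisFun R ι).exteriorPower k) ((Pi.basisFun R ι).exteriorPower k)
    (exteriorPower.map k (toLin' M))

theorem compound_mul (M N : Matrix ι ι R) : compound k (M * N) = compound k M * compound k N := by
  rw [compound, toLin'_mul, exteriorPower.map_comp,
    LinearMap.toMatrix_comp _ ((Pi.basisFun R ι).exteriorPower k)]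
  rfl

theorem compound_one : compound k (1 : Matrix ι ι R) = 1 := by
  rw [compound, toLin'_one, exteriorPower.map_id, LinearMap.toMatrix_id]

theorem compound_apply (M : Matrix ι ι R) (s u : Set.powersetCard ι k) :
    compound k M s u = (M.submatrix (ofFinEmbEquiv.symm s) (ofFinEmbEquiv.symm u)).det := by
  rw [compound, LinearMap.toMatrix_apply, exteriorPower.basis_repr_apply,
    exteriorPower.basis_apply, exteriorPower.ιMulti_family, exteriorPower.map_apply_ιMulti,
    exteriorPower.ιMultiDual_apply_ιMulti, ← det_transpose]
  congr 1
  ext i j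
  simp

theorem compound_diagonal (v : ι → R) :
    compound k (diagonal v) = diagonal fun s : Set.powersetCard ι k => ∏ i ∈ s.val, v i := by
  ext s u
  set b := (Pi.basisFun R ι).exteriorPower k
  have hcol : exteriorPower.map k (toLin' (diagonal v)) (b u) = (∏ i ∈ u.val, v i) • b u := by
    have hscale : toLin' (diagonal v) ∘ (Pi.basisFun R ι ∘ ofFinEmbEquiv.symm u) =
        fun j => v (ofFinEmbEquiv.symm u j) • (Pi.basisFun R ι ∘ ofFinEmbEquiv.symm u) j := by
      ext j : 1
      simp [mulVec_single, ← Pi.single_smul]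
    rw [exteriorPower.basis_apply, exteriorPower.ιMulti_family, exteriorPower.map_apply_ιMulti,
      hscale, AlternatingMap.map_smul_univ, prod_ofFinEmbEquiv_symm]
  rw [compound, LinearMap.toMatrix_apply, hcol, map_smul, Module.Basis.repr_self]
  by_cases h : s = u
  · subst h; simp
  · simp [h]

theorem compound_conjTranspose [StarRing R] (M : Matrix ι ι R) :
    compound k Mᴴ = (compound k M)ᴴ := by
  ext s u
  rw [conjTranspose_apply, compound_apply, compound_apply, ← det_conjTranspose,
    conjTranspose_submatrix]

theorem compound_mem_unitaryGroup [StarRing R] {U : Matrix ι ι R} (hU : U ∈ unitaryGroup ι R) :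
    compound k U ∈ unitaryGroup (Set.powersetCard ι k) R := by
  rw [mem_unitaryGroup_iff', star_eq_conjTranspose, ← compound_conjTranspose, ← compound_mul,
    ← star_eq_conjTranspose, (mem_unitaryGroup_iff').1 hU, compound_one]

theorem IsHermitian.compound [StarRing R] {M : Matrix ι ι R} (hM : M.IsHermitian) :
    (compound k M).IsHermitian := by
  rw [IsHermitian, ← compound_conjTranspose, hM.eq]

theorem compound_mul_diagonal_mul_star [StarRing R] (U : Matrix ι ι R) (v : ι → R) :
    compound k (U * diagonal v * star U) =
      compound k U * diagonal (fun s : Set.powersetCard ι k => ∏ i ∈ s.val, v i) *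
        star (compound k U) := by
  rw [compound_mul, compound_mul, compound_diagonal, star_eq_conjTranspose,
    compound_conjTranspose, star_eq_conjTranspose]

end Compound

section Loewner

open scoped MatrixOrder ComplexOrder

variable {𝕜 m : Type*} [RCLike 𝕜] [DecidableEq m]

theorem diagonal_le_smul_one_iff (g : m → ℝ) (c : ℝ) :
    diagonal (fun i => (g i : 𝕜)) ≤ c • 1 ↔ ∀ i, g i ≤ c := by
  rw [le_iff, RCLike.real_smul_eq_coe_smul (K := 𝕜), smul_one_eq_diagonal, diagonal_sub,
    posSemidef_diagonal_iff]
  simp_rw [← RCLike.ofReal_sub, RCLike.ofReal_nonneg, sub_nonneg]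

variable [Fintype m]

theorem unitary_mul_diagonal_mul_star_le_smul_one_iff {U : Matrix m m 𝕜}
    (hU : U ∈ unitaryGroup m 𝕜) (g : m → ℝ) (c : ℝ) :
    U * diagonal (fun i => (g i : 𝕜)) * star U ≤ c • 1 ↔ ∀ i, g i ≤ c := by
  rw [← diagonal_le_smul_one_iff (𝕜 := 𝕜)]
  have hUU : star U * U = 1 := (mem_unitaryGroup_iff').1 hU
  have hUU' : U * star U = 1 := (mem_unitaryGroup_iff).1 hU
  constructor
  · intro h
    simpa [← mul_assoc, hUU, mul_assoc _ _ U, mul_assoc _ U] using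
      star_left_conjugate_le_conjugate h U
  · intro h
    simpa [mul_assoc, hUU'] using star_right_conjugate_le_conjugate h U

theorem mul_mul_le_smul_one {S T : Matrix m m 𝕜} (hS : S.IsHermitian) {a b : ℝ}
    (hSS : S * S ≤ a • 1) (hT : T ≤ b • 1) (hb : 0 ≤ b) : S * T * S ≤ (a * b) • 1 :=
  calc S * T * S = star S * T * S := by rw [star_eq_conjTranspose, hS.eq]
    _ ≤ star S * (b • 1) * S := star_left_conjugate_le_conjugate hT S
    _ = b • (S * S) := by rw [star_eq_conjTranspose, hS.eq, mul_smul_one, smul_mul]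
    _ ≤ b • (a • 1) := smul_le_smul_of_nonneg_left hSS hb
    _ = (a * b) • 1 := by rw [smul_smul, mul_comm]

end Loewner

open scoped MatrixOrder in
theorem compound_unitary_mul_diagonal_mul_star_le_smul_one_iff {𝕜 ι : Type*} [RCLike 𝕜]
    [Fintype ι] [LinearOrder ι] (k : ℕ) {U : Matrix ι ι 𝕜} (hU : U ∈ unitaryGroup ι 𝕜)
    (g : ι → ℝ) (c : ℝ) :
    compound k (U * diagonal (fun i => (g i : 𝕜)) * star U) ≤ c • 1 ↔
      ∀ s : Set.powersetCard ι k, ∏ i ∈ s.val, g i ≤ c := by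
  simp_rw [compound_mul_diagonal_mul_star, ← RCLike.ofReal_prod]
  exact unitary_mul_diagonal_mul_star_le_smul_one_iff (compound_mem_unitaryGroup k hU) _ c

end Matrix

namespace CGO

open Matrix Finset
open scoped MatrixOrder ComplexOrder

section Spectral

variable {n : Type*} [Fintype n] [DecidableEq n]

theorem det_cfc {𝕜 : Type*} [RCLike 𝕜] {A : Matrix n n 𝕜} (hA : A.IsHermitian) (f : ℝ → ℝ) :
    (hA.cfc f).det = ∏ i, (f (hA.eigenvalues i) : 𝕜) := by
  rw [IsHermitian.cfc, Unitary.conjStarAlgAut_apply, det_mul_right_comm,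
    Unitary.mul_star_self_of_mem hA.eigenvectorUnitary.2, one_mul, det_diagonal]
  rfl

theorem mpow_mul_mpow {A : Matrix n n ℂ} (hA : A.PosDef) (s u : ℝ) :
    mpow hA.1 s * mpow hA.1 u = mpow hA.1 (s + u) := by
  simp only [mpow, ← hA.1.cfc_eq]
  rw [← cfc_mul _ _ A (A.finite_real_spectrum.continuousOn _)
    (A.finite_real_spectrum.continuousOn _)]
  exact cfc_congr fun x hx => (Real.rpow_add (hA.isStrictlyPositive.spectrum_pos hx) s u).symm

end Spectral

variable {d k : ℕ}

theorem eigDesc_antitone {A : Matrix (Fin d) (Fin d) ℂ} (hA : A.IsHermitian) :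
    Antitone (eigDesc hA) :=
  fun _ _ hij => neg_le_neg_iff.1 (Tuple.monotone_sort (fun j => -hA.eigenvalues j) hij)

theorem prod_eigDesc_comp {A : Matrix (Fin d) (Fin d) ℂ} (hA : A.IsHermitian) (f : ℝ → ℝ) :
    ∏ j, f (eigDesc hA j) = ∏ i, f (hA.eigenvalues i) :=
  Equiv.prod_comp _ (f ∘ hA.eigenvalues)

theorem prod_eigDesc_eq_det {A : Matrix (Fin d) (Fin d) ℂ} (hA : A.IsHermitian) :
    ((∏ j, eigDesc hA j : ℝ) : ℂ) = A.det := by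
  rw [hA.det_eq_prod_eigenvalues, Complex.ofReal_prod]
  exact Equiv.prod_comp _ (fun i => (hA.eigenvalues i : ℂ))

theorem compound_cfc_le_smul_one {A : Matrix (Fin d) (Fin d) ℂ} (hA : A.PosSemidef)
    (hk : k ≤ d) {f : ℝ → ℝ} (hf0 : ∀ x, 0 ≤ x → 0 ≤ f x) (hf : MonotoneOn f (Set.Ici 0)) :
    compound k (hA.1.cfc f) ≤ (∏ j : Fin k, f (eigDesc hA.1 (Fin.castLE hk j))) • 1 := by
  rw [IsHermitian.cfc, Unitary.conjStarAlgAut_apply]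
  refine (compound_unitary_mul_diagonal_mul_star_le_smul_one_iff k
    hA.1.eigenvectorUnitary.2 _ _).2 fun s => ?_
  set σ := Tuple.sort fun j => -hA.1.eigenvalues j
  calc ∏ i ∈ s.val, f (hA.1.eigenvalues i)
      = ∏ i ∈ s.val.map σ.symm.toEmbedding, f (eigDesc hA.1 i) := by simp [eigDesc, σ]
    _ ≤ _ := prod_le_prod_castLE_of_antitone hk (fun i => hf0 _ (hA.eigenvalues_nonneg _))
        (fun i j hij => hf (hA.eigenvalues_nonneg _) (hA.eigenvalues_nonneg _)
          (eigDesc_antitone hA.1 hij)) (by simp)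

theorem prod_eigDesc_le_of_compound_le {C : Matrix (Fin d) (Fin d) ℂ} (hC : C.IsHermitian)
    (hk : k ≤ d) {c : ℝ} (h : compound k C ≤ c • 1) :
    ∏ j : Fin k, eigDesc hC (Fin.castLE hk j) ≤ c := by
  rw [hC.spectral_theorem, Unitary.conjStarAlgAut_apply] at h
  let top : Fin k ↪ Fin d :=
    ⟨fun j => Tuple.sort (fun j => -hC.eigenvalues j) (Fin.castLE hk j),
      (Equiv.injective _).comp (Fin.castLE_injective hk)⟩
  simpa [Set.powersetCard.val_ofFinEmb, top, eigDesc] using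
    (compound_unitary_mul_diagonal_mul_star_le_smul_one_iff k
      hC.eigenvectorUnitary.2 _ _).1 h (Set.powersetCard.ofFinEmb k (Fin d) top)

/-- The eigenvalues of `A^{1-t}B^t` are those of the Hermitian matrix
`A^{(1-t)/2} B^t A^{(1-t)/2}`, to which it is similar. -/
theorem log_majorisation_power_mean {d : ℕ} {A B : Matrix (Fin d) (Fin d) ℂ}
    (hA : A.PosDef) (hB : B.PosDef) {t : ℝ} (ht : t ∈ Set.Icc (0 : ℝ) 1) :
    (∀ k : ℕ, (hk : k ≤ d) →
      ∏ j : Fin k, eigDesc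
          (mul_mul_isHermitian (mpow_isHermitian hA.1 ((1 - t)/2))
            (mpow_isHermitian hB.1 t)) (Fin.castLE hk j) ≤
        ∏ j : Fin k, (eigDesc hA.1 (Fin.castLE hk j)) ^ (1 - t) *
          (eigDesc hB.1 (Fin.castLE hk j)) ^ t) ∧
    (∏ j : Fin d, eigDesc
        (mul_mul_isHermitian (mpow_isHermitian hA.1 ((1 - t)/2))
          (mpow_isHermitian hB.1 t)) j =
      ∏ j : Fin d, (eigDesc hA.1 j) ^ (1 - t) * (eigDesc hB.1 j) ^ t) := by
  obtain ⟨ht0, ht1⟩ := ht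
  have hP : mpow hA.1 ((1 - t) / 2) * mpow hA.1 ((1 - t) / 2) = mpow hA.1 (1 - t) := by
    rw [mpow_mul_mpow hA, add_halves]
  refine ⟨fun k hk => ?_, ?_⟩
  · have hAk := compound_cfc_le_smul_one hA.posSemidef hk (f := fun x => x ^ (1 - t))
      (fun x hx => Real.rpow_nonneg hx _)
      (Real.monotoneOn_rpow_Ici_of_exponent_nonneg (by linarith))
    have hBk := compound_cfc_le_smul_one hB.posSemidef hk (f := fun x => x ^ t)
      (fun x hx => Real.rpow_nonneg hx _) (Real.monotoneOn_rpow_Ici_of_exponent_nonneg ht0)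
    rw [prod_mul_distrib]
    refine prod_eigDesc_le_of_compound_le _ hk ?_
    rw [compound_mul, compound_mul]
    refine mul_mul_le_smul_one ((mpow_isHermitian hA.1 _).compound k)
      (by rw [← compound_mul, hP]; exact hAk) hBk ?_
    exact prod_nonneg fun j _ => Real.rpow_nonneg (hB.eigenvalues_pos _).le _
  · apply Complex.ofReal_injective
    rw [prod_eigDesc_eq_det, det_mul, det_mul, mul_right_comm, ← det_mul, hP, prod_mul_distrib,
      Complex.ofReal_mul, prod_eigDesc_comp hA.1 (· ^ (1 - t)), prod_eigDesc_comp hB.1 (· ^ t),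
      Complex.ofReal_prod, Complex.ofReal_prod, mpow, mpow, det_cfc, det_cfc]
    rfl

end CGO
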